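/- Let (C, m) be a flat minimal G-gapped A∞ algebra and f a G-gapped formal diffeomorphism of C with f_{1,0} = Id. Then (f*m)_{2,0} = m_{2,0}. Furthermore, let ν₀ > 2 satisfy ν(f) ≥ ν₀ − 1 and ν(m) ≥ ν₀, and suppose (f*m)_{k',β'} = 0 whenever 2 < k' + β' < ν₀ and whenever k' + β' = ν₀ with k' < k. Then for β = ν₀ − k one has (f*m)_{k,β} = m_{k,β} + 𝔟(f_{k−1,β}), where f_{k−1,β} is regarded as a Hochschild cochain of the underlying algebra A_C = (C, ·); and this expression vanishes if both inequalities ν(f) ≥ ν₀ − 1 and ν(m) ≥ ν₀ are strict. -/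

import Mathlib

/-!
Common definitions: gapped `A∞` algebras over the field `𝕂`, graded by `ℤ/N` (`N` even),
with gapping monoid `G ⊆ ℝ≥0`.  Operations are recorded as families of `k`-ary maps
together with multilinearity and degree conditions; all sign conventions follow the paper.
Since the Koszul signs depend on the degrees of homogeneous arguments, all identities
involving signs are stated on homogeneous tuples.
-/

open scoped BigOperators

noncomputable section

/-- The sign `(−1)^x` for a parity `x : ZMod 2`, valued in `𝕂`. -/
def sgn2 (𝕂 : Type) [Field 𝕂] (x : ZMod 2) : 𝕂 := if x = 0 then 1 else -1

/-- Parity of a degree in `ℤ/N`; for even `N` this is the canonical map `ℤ/N → ℤ/2`. -/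
def par2 {N : ℕ} (d : ZMod N) : ZMod 2 := ((ZMod.val d : ℕ) : ZMod 2)

/-- Extension of a tuple by `0`. -/
def extZ {X : Type} [Zero X] {k : ℕ} (α : Fin k → X) : ℕ → X :=
  fun n => if h : n < k then α ⟨n, h⟩ else 0

/-- The tuple `(A 0, …, A (i₀−1), v, A (i₀+k₂), …)` of length `k₁` obtained by replacing the
`k₂` entries of `A` starting at position `i₀` by the single entry `v`. -/
def insArg {X : Type} [Zero X] (k₁ k₂ i₀ : ℕ) (v : X) (A : ℕ → X) : Fin k₁ → X :=
  fun j => if (j : ℕ) < i₀ then A j else if (j : ℕ) = i₀ then v else A ((j : ℕ) + k₂ - 1)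

/-- Multilinearity of a `k`-ary map. -/
def IsMultilin (𝕂 : Type) [Field 𝕂] {C D : Type} [AddCommGroup C] [Module 𝕂 C]
    [AddCommGroup D] [Module 𝕂 D] {k : ℕ} (f : (Fin k → C) → D) : Prop :=
  (∀ (α : Fin k → C) (j : Fin k) (x y : C),
    f (Function.update α j (x + y)) = f (Function.update α j x) + f (Function.update α j y)) ∧
  (∀ (α : Fin k → C) (j : Fin k) (c : 𝕂) (x : C),
    f (Function.update α j (c • x)) = c • f (Function.update α j x))

/-- The Koszul sign exponent `s(σ;α) = Σ_{i<j, σ(i)>σ(j)} (|α_{σ(i)}|+1)(|α_{σ(j)}|+1)`,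
computed from the degrees `d j = |α_j|`. -/
def koszulSign {N : ℕ} {k : ℕ} (σ : Equiv.Perm (Fin k)) (d : Fin k → ZMod N) : ZMod 2 :=
  ∑ p ∈ Finset.univ.filter (fun p : Fin k × Fin k => p.1 < p.2 ∧ σ p.2 < σ p.1),
    (par2 (d (σ p.1)) + 1) * (par2 (d (σ p.2)) + 1)

/-- `s(τ;α)` for the order-reversal permutation `τ : i ↦ k+1−i`. -/
def revSign {N : ℕ} {k : ℕ} (d : Fin k → ZMod N) : ZMod 2 :=
  koszulSign Fin.revPerm d

/-- A `k`-ary map between graded spaces has degree `t`: it sends homogeneous tuples of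
multidegree `d` into the piece of degree `Σ d + t`. -/
def HasDeg {𝕂 : Type} [Field 𝕂] {N : ℕ} {C D : Type} [AddCommGroup C] [Module 𝕂 C]
    [AddCommGroup D] [Module 𝕂 D] (ℳ : ZMod N → Submodule 𝕂 C)
    (𝒩 : ZMod N → Submodule 𝕂 D) (t : ℤ) {k : ℕ} (f : (Fin k → C) → D) : Prop :=
  ∀ (d : Fin k → ZMod N) (α : Fin k → C), (∀ j, α j ∈ ℳ (d j)) →
    f α ∈ 𝒩 ((∑ j, d j) + (t : ZMod N))

/-- The exponent `Σ_{j<i₀} (|α_j|+1)` appearing in the `A∞` relations (0-indexed). -/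
def insSign {N : ℕ} (D : ℕ → ZMod N) (i₀ : ℕ) : ZMod 2 :=
  ∑ j ∈ Finset.range i₀, (par2 (D j) + 1)

/-- Index set of the `G`-gapped `A∞` relations for inputs of arity `k` and energy `β`:
tuples `(k₁, k₂, i₀, β₁, β₂)` with `k₁+k₂ = k+1`, `i₀ < k₁` (`i₀` is the 0-indexed insertion
position) and `β₁+β₂ = β`.  By the finiteness assumption on `G` this set is finite. -/
def ainfIdx (G : AddSubmonoid ℝ) (k : ℕ) (β : G) : Set (ℕ × ℕ × ℕ × G × G) :=
  {t | t.1 + t.2.1 = k + 1 ∧ t.2.2.1 < t.1 ∧ t.2.2.2.1 + t.2.2.2.2 = β}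

/-- The term of the `A∞`-type relations indexed by `(k₁,k₂,i₀,β₁,β₂)`:
`(−1)^{Σ_{j<i₀}(|α_j|+1)} g_{k₁,β₁}(α₁,…,α_{i₀}, m_{k₂,β₂}(α_{i₀+1},…), …, α_k)`
(outer family `g`, inner family `m`). -/
def ainfTerm (𝕂 : Type) [Field 𝕂] {N : ℕ} {G : AddSubmonoid ℝ} {C D : Type}
    [AddCommGroup C] [Module 𝕂 C] [AddCommGroup D] [Module 𝕂 D]
    (g : ∀ k : ℕ, G → (Fin k → C) → D) (m : ∀ k : ℕ, G → (Fin k → C) → C)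
    {k : ℕ} (d : Fin k → ZMod N) (α : Fin k → C) : ℕ × ℕ × ℕ × G × G → D :=
  fun t =>
    sgn2 𝕂 (insSign (extZ d) t.2.2.1) •
      g t.1 t.2.2.2.1
        (insArg t.1 t.2.1 t.2.2.1
          (m t.2.1 t.2.2.2.2 fun l => extZ α (t.2.2.1 + (l : ℕ))) (extZ α))

/-- A `G`-gapped `A∞` algebra structure on the graded space `(C, ℳ)`: operations
`m_{k,β}` that are multilinear of degree `2−k`, with `m_{0,0} = 0`, satisfying the
`G`-gapped `A∞` relations on homogeneous tuples. -/
structure IsGappedAinf (𝕂 : Type) [Field 𝕂] {N : ℕ} (G : AddSubmonoid ℝ) {C : Type}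
    [AddCommGroup C] [Module 𝕂 C] (ℳ : ZMod N → Submodule 𝕂 C)
    (m : ∀ k : ℕ, G → (Fin k → C) → C) : Prop where
  multilinear : ∀ (k : ℕ) (β : G), IsMultilin 𝕂 (m k β)
  deg : ∀ (k : ℕ) (β : G), HasDeg ℳ ℳ (2 - (k : ℤ)) (m k β)
  zero : m 0 0 = 0
  rel : ∀ (k : ℕ) (β : G) (d : Fin k → ZMod N) (α : Fin k → C), (∀ j, α j ∈ ℳ (d j)) →
    (∑ᶠ t ∈ ainfIdx G k β, ainfTerm 𝕂 m m d α t) = 0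

/-- A `G`-gapped `A∞` pre-homomorphism: maps `f_{k,β}`, multilinear of degree `1−k`,
with `f_{0,0} = 0`. -/
structure IsGappedPreHom (𝕂 : Type) [Field 𝕂] {N : ℕ} (G : AddSubmonoid ℝ) {C D : Type}
    [AddCommGroup C] [Module 𝕂 C] [AddCommGroup D] [Module 𝕂 D]
    (ℳ : ZMod N → Submodule 𝕂 C) (𝒩 : ZMod N → Submodule 𝕂 D)
    (f : ∀ k : ℕ, G → (Fin k → C) → D) : Prop where
  multilinear : ∀ (k : ℕ) (β : G), IsMultilin 𝕂 (f k β)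
  deg : ∀ (k : ℕ) (β : G), HasDeg ℳ 𝒩 (1 - (k : ℤ)) (f k β)
  zero : f 0 0 = 0

/-- Index set for the composition-type sums: tuples `(l, (r₁,…,r_l), β₀, (β₁,…,β_l))`
with `r₁+⋯+r_l = k` and `β₀+β₁+⋯+β_l = β`. -/
def homIdx (G : AddSubmonoid ℝ) (k : ℕ) (β : G) :
    Set (Σ l : ℕ, (Fin l → ℕ) × G × (Fin l → G)) :=
  {t | (∑ j, t.2.1 j) = k ∧ t.2.2.1 + (∑ j, t.2.2.2 j) = β}

/-- Offset `r₁ + ⋯ + r_{j}` of the `j`-th chunk of the inputs. -/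
def chunkOff {l : ℕ} (r : Fin l → ℕ) (j : Fin l) : ℕ :=
  ∑ j' ∈ Finset.univ.filter (fun j' : Fin l => (j' : ℕ) < (j : ℕ)), r j'

/-- The term `g_{l,β₀}(f_{r₁,β₁}(α₁,…,α_{r₁}), …, f_{r_l,β_l}(α_{k−r_l+1},…,α_k))`. -/
def homTerm {G : AddSubmonoid ℝ} {C D E : Type} [Zero C]
    (g : ∀ l : ℕ, G → (Fin l → D) → E) (f : ∀ k : ℕ, G → (Fin k → C) → D)
    {k : ℕ} (α : Fin k → C) : (Σ l : ℕ, (Fin l → ℕ) × G × (Fin l → G)) → E :=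
  fun t =>
    g t.1 t.2.2.1 fun j =>
      f (t.2.1 j) (t.2.2.2 j) fun x => extZ α (chunkOff t.2.1 j + (x : ℕ))

/-- Composition of `G`-gapped `A∞` pre-homomorphisms. -/
def compPre (G : AddSubmonoid ℝ) {C D E : Type} [Zero C] [AddCommMonoid E]
    (g : ∀ l : ℕ, G → (Fin l → D) → E) (f : ∀ k : ℕ, G → (Fin k → C) → D) :
    ∀ k : ℕ, G → (Fin k → C) → E :=
  fun k β α => ∑ᶠ t ∈ homIdx G k β, homTerm g f α t

/-- A `G`-gapped `A∞` homomorphism from `(C, mC)` to `(D, mD)`. -/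
structure IsGappedHom (𝕂 : Type) [Field 𝕂] {N : ℕ} (G : AddSubmonoid ℝ) {C D : Type}
    [AddCommGroup C] [Module 𝕂 C] [AddCommGroup D] [Module 𝕂 D]
    (ℳ : ZMod N → Submodule 𝕂 C) (𝒩 : ZMod N → Submodule 𝕂 D)
    (mC : ∀ k : ℕ, G → (Fin k → C) → C) (mD : ∀ k : ℕ, G → (Fin k → D) → D)
    (f : ∀ k : ℕ, G → (Fin k → C) → D) : Prop where
  prehom : IsGappedPreHom 𝕂 G ℳ 𝒩 f
  hom : ∀ (k : ℕ) (β : G) (d : Fin k → ZMod N) (α : Fin k → C), (∀ j, α j ∈ ℳ (d j)) →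
    (∑ᶠ t ∈ homIdx G k β, homTerm mD f α t) = ∑ᶠ t ∈ ainfIdx G k β, ainfTerm 𝕂 f mC d α t

/-- `f'` is the opposite family of `f`:
`f'_{k,β}(α₁,…,α_k) = (−1)^{s(τ;α)+k+1} f_{k,β}(α_k,…,α₁)` on homogeneous tuples. -/
def IsOppFam (𝕂 : Type) [Field 𝕂] {N : ℕ} {G : AddSubmonoid ℝ} {C D : Type}
    [AddCommGroup C] [Module 𝕂 C] [AddCommGroup D] [Module 𝕂 D]
    (ℳ : ZMod N → Submodule 𝕂 C)
    (f f' : ∀ k : ℕ, G → (Fin k → C) → D) : Prop :=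
  ∀ (k : ℕ) (β : G) (d : Fin k → ZMod N) (α : Fin k → C), (∀ j, α j ∈ ℳ (d j)) →
    f' k β α = sgn2 𝕂 (revSign d + (k : ZMod 2) + 1) • f k β fun j => α (Fin.rev j)

/-- Self-duality of a family with respect to involutions `cC`, `cD`:
`f_{k,β}(c(α₁),…,c(α_k)) = (−1)^{s(τ;α)+k+1} c(f_{k,β}(α_k,…,α₁))` on homogeneous tuples. -/
def IsSelfDualFam (𝕂 : Type) [Field 𝕂] {N : ℕ} {G : AddSubmonoid ℝ} {C D : Type}
    [AddCommGroup C] [Module 𝕂 C] [AddCommGroup D] [Module 𝕂 D]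
    (ℳ : ZMod N → Submodule 𝕂 C) (cC : C →ₗ[𝕂] C) (cD : D →ₗ[𝕂] D)
    (f : ∀ k : ℕ, G → (Fin k → C) → D) : Prop :=
  ∀ (k : ℕ) (β : G) (d : Fin k → ZMod N) (α : Fin k → C), (∀ j, α j ∈ ℳ (d j)) →
    f k β (fun j => cC (α j)) =
      sgn2 𝕂 (revSign d + (k : ZMod 2) + 1) • cD (f k β fun j => α (Fin.rev j))

/-- The operation `m_{1,0}`, as an endomorphism of `C`. -/
def dOne {G : AddSubmonoid ℝ} {C : Type} [Zero C] (m : ∀ k : ℕ, G → (Fin k → C) → C) :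
    C → C :=
  fun x => m 1 0 ![x]

/-- The Hochschild coboundary of a `k`-cochain `η`, evaluated on a homogeneous `(k+1)`-tuple
of multidegree `d`.  Here `P a b x y` is the (possibly sign-twisted) product of `x ∈ ℳ a`
and `y ∈ ℳ b`, `e` is the parity of the internal degree `|η|` of `η` (as a map
`A[1]^{⊗k} → A`), and `out` is such that `η` sends tuples of multidegree `d'` into degree
`Σ d' + out`.  The formula is
`𝔟(η)(α₁,…,α_{k+1}) = (−1)^{|η|(|α₁|+1)+1} α₁·η(α₂,…,α_{k+1})`
`+ Σ_{i=1}^{k} (−1)^{|η|+1+Σ_{j=1}^{i}(|α_j|+1)} η(α₁,…,α_i·α_{i+1},…,α_{k+1})`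
`+ (−1)^{|η|+Σ_{j=1}^{k}(|α_j|+1)} η(α₁,…,α_k)·α_{k+1}`. -/
def hochB (𝕂 : Type) [Field 𝕂] {N : ℕ} {C : Type} [AddCommGroup C] [Module 𝕂 C]
    (P : ZMod N → ZMod N → C → C → C) (e : ZMod 2) (out : ZMod N)
    {k : ℕ} (η : (Fin k → C) → C) (d : Fin (k + 1) → ZMod N) (α : Fin (k + 1) → C) : C :=
  sgn2 𝕂 (e * (par2 (d 0) + 1) + 1) •
      P (d 0) ((∑ j : Fin k, d j.succ) + out) (α 0) (η fun j => α j.succ)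
    + (∑ i₀ ∈ Finset.range k,
        sgn2 𝕂 (e + 1 + ∑ j ∈ Finset.range (i₀ + 1), (par2 (extZ d j) + 1)) •
          η (insArg k 2 i₀
              (P (extZ d i₀) (extZ d (i₀ + 1)) (extZ α i₀) (extZ α (i₀ + 1))) (extZ α)))
    + sgn2 𝕂 (e + ∑ j ∈ Finset.range k, (par2 (extZ d j) + 1)) •
        P ((∑ j : Fin k, d j.castSucc) + out) (d (Fin.last k))
          (η fun j => α j.castSucc) (α (Fin.last k))

/-- The product of the underlying algebra of an `A∞` algebra:
`x ∘ y = (−1)^{|x|} m_{2,0}(x,y)` for `x` of degree `a`. -/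
def ulP (𝕂 : Type) [Field 𝕂] {N : ℕ} {G : AddSubmonoid ℝ} {C : Type} [AddCommGroup C]
    [Module 𝕂 C] (m : ∀ k : ℕ, G → (Fin k → C) → C) :
    ZMod N → ZMod N → C → C → C :=
  fun a _ x y => sgn2 𝕂 (par2 a) • m 2 0 ![x, y]

/-- The Hochschild coboundary for a graded associative algebra `A`, of a `k`-cochain `η`
of internal degree `t` (as a map `A[1]^{⊗k} → A`, so that `η` sends homogeneous tuples of
multidegree `d` into degree `Σ d + t − k`). -/
def hochBAlg (𝕂 : Type) [Field 𝕂] {N : ℕ} {A : Type} [Ring A] [Algebra 𝕂 A]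
    (t : ZMod N) {k : ℕ} (η : (Fin k → A) → A) (d : Fin (k + 1) → ZMod N)
    (α : Fin (k + 1) → A) : A :=
  hochB 𝕂 (fun _ _ x y => x * y) (par2 t) (t - (k : ZMod N)) η d α

/-- A Hochschild `k`-cochain of the graded algebra `(A, ℳ)` of internal degree `t`:
a multilinear map `A^{⊗k} → A`, regarded as a map `A[1]^{⊗k} → A` of degree `t`. -/
def IsHochCochain (𝕂 : Type) [Field 𝕂] {N : ℕ} {A : Type} [Ring A] [Algebra 𝕂 A]
    (ℳ : ZMod N → Submodule 𝕂 A) (t : ZMod N) {k : ℕ} (η : (Fin k → A) → A) : Prop :=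
  IsMultilin 𝕂 η ∧
    ∀ (d : Fin k → ZMod N) (α : Fin k → A), (∀ j, α j ∈ ℳ (d j)) →
      η α ∈ ℳ ((∑ j, d j) + t - (k : ZMod N))

/-- The graded-commutativity relation defining the free graded commutative algebra on the
graded vector space `(V, 𝒱)`: `v ⊗ w = (−1)^{|v||w|} w ⊗ v` for homogeneous `v, w`. -/
inductive GCRel (𝕂 : Type) [Field 𝕂] {N : ℕ} (V : Type) [AddCommGroup V] [Module 𝕂 V]
    (𝒱 : ZMod N → Submodule 𝕂 V) : TensorAlgebra 𝕂 V → TensorAlgebra 𝕂 V → Prop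
  | comm : ∀ {a b : ZMod N} {v w : V}, v ∈ 𝒱 a → w ∈ 𝒱 b →
      GCRel 𝕂 V 𝒱 (TensorAlgebra.ι 𝕂 v * TensorAlgebra.ι 𝕂 w)
        (sgn2 𝕂 (par2 a * par2 b) • (TensorAlgebra.ι 𝕂 w * TensorAlgebra.ι 𝕂 v))

/-- The free graded commutative algebra `ΛV` on the graded vector space `(V, 𝒱)`: the
quotient of the tensor algebra by the two-sided ideal generated by
`v⊗w − (−1)^{|v||w|} w⊗v`. -/
abbrev FreeGCA (𝕂 : Type) [Field 𝕂] {N : ℕ} (V : Type) [AddCommGroup V] [Module 𝕂 V]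
    (𝒱 : ZMod N → Submodule 𝕂 V) : Type :=
  RingQuot (GCRel 𝕂 V 𝒱)

/-- The image of `v ∈ V` in `ΛV`. -/
def gcaGen (𝕂 : Type) [Field 𝕂] {N : ℕ} (V : Type) [AddCommGroup V] [Module 𝕂 V]
    (𝒱 : ZMod N → Submodule 𝕂 V) (v : V) : FreeGCA 𝕂 V 𝒱 :=
  RingQuot.mkAlgHom 𝕂 (GCRel 𝕂 V 𝒱) (TensorAlgebra.ι 𝕂 v)

/-- The grading of `ΛV`: the piece of degree `e` is spanned by products of homogeneous
generators whose degrees sum to `e`. -/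
def gcaGrade (𝕂 : Type) [Field 𝕂] {N : ℕ} (V : Type) [AddCommGroup V] [Module 𝕂 V]
    (𝒱 : ZMod N → Submodule 𝕂 V) (e : ZMod N) : Submodule 𝕂 (FreeGCA 𝕂 V 𝒱) :=
  Submodule.span 𝕂 {x | ∃ l : List (ZMod N × V), (∀ p ∈ l, p.2 ∈ 𝒱 p.1) ∧
    (l.map Prod.fst).sum = e ∧ x = (l.map fun p => gcaGen 𝕂 V 𝒱 p.2).prod}
end



lemma zmod2_cases (x : ZMod 2) : x = 0 ∨ x = 1 := by fin_cases x <;> [exact Or.inl rfl; exact Or.inr rfl]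

lemma sgn2_zero {𝕂 : Type} [Field 𝕂] : sgn2 𝕂 0 = 1 := by simp [sgn2]

lemma sgn2_one {𝕂 : Type} [Field 𝕂] : sgn2 𝕂 1 = -1 := by
  have : (1 : ZMod 2) ≠ 0 := by decide
  simp [sgn2, this]

lemma sgn2_add {𝕂 : Type} [Field 𝕂] (x y : ZMod 2) :
    sgn2 𝕂 (x + y) = sgn2 𝕂 x * sgn2 𝕂 y := by
  rcases zmod2_cases x with hx | hx <;> rcases zmod2_cases y with hy | hy <;>
    subst hx <;> subst hy <;>
    simp only [add_zero, zero_add, sgn2_zero, sgn2_one, show (1+1 : ZMod 2) = 0 from by decide,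
      mul_one, one_mul] <;> ring

-- cast of natAbs mod 2
lemma natAbs_cast2 (x : ℤ) : ((x.natAbs : ℕ) : ZMod 2) = ((x : ℤ) : ZMod 2) := by
  rcases Int.natAbs_eq x with h | h
  · conv_rhs => rw [h, Int.cast_natCast]
  · conv_rhs => rw [h, Int.cast_neg, Int.cast_natCast]
    rcases zmod2_cases ((x.natAbs : ZMod 2)) with h2 | h2 <;> rw [h2] <;> decide

lemma nmod_cast2 {N : ℕ} (hN : 2 ∣ N) (a : ℕ) : ((a % N : ℕ) : ZMod 2) = (a : ZMod 2) := by
  conv_rhs => rw [← Nat.div_add_mod a N]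
  push_cast
  rw [(ZMod.natCast_eq_zero_iff N 2).2 hN]
  ring

lemma par2_natCast {N : ℕ} (hN : 2 ∣ N) (n : ℕ) : par2 ((n : ZMod N)) = (n : ZMod 2) := by
  unfold par2
  rw [ZMod.val_natCast, nmod_cast2 hN]

lemma par2_add {N : ℕ} (hN : 2 ∣ N) (a b : ZMod N) : par2 (a + b) = par2 a + par2 b := by
  rcases Nat.eq_zero_or_pos N with h0 | hpos
  · subst h0
    unfold par2
    revert a b
    show ∀ a b : ℤ, (((a + b : ℤ).natAbs : ℕ) : ZMod 2) = ((a : ℤ).natAbs : ZMod 2) + ((b : ℤ).natAbs : ZMod 2)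
    intro a b
    rw [natAbs_cast2, natAbs_cast2, natAbs_cast2, Int.cast_add]
  · haveI : NeZero N := ⟨hpos.ne'⟩
    unfold par2
    rw [ZMod.val_add, nmod_cast2 hN]
    push_cast; ring

lemma par2_intCast {N : ℕ} (hN : 2 ∣ N) (n : ℤ) : par2 ((n : ZMod N)) = (n : ZMod 2) := by
  rcases Nat.eq_zero_or_pos N with h0 | hpos
  · subst h0
    unfold par2
    show (((n : ℤ).natAbs : ℕ) : ZMod 2) = _
    rw [natAbs_cast2]
  · haveI : NeZero N := ⟨hpos.ne'⟩
    unfold par2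
    have h := ZMod.val_intCast (n := N) n
    have : (((n : ZMod N).val : ℕ) : ZMod 2) = (((n % N : ℤ)) : ZMod 2) := by
      rw [← h]; push_cast; ring
    rw [this, Int.emod_def]
    push_cast
    rw [(ZMod.natCast_eq_zero_iff N 2).2 hN]
    ring

section Multilin
variable {𝕂 : Type} [Field 𝕂] {C D : Type} [AddCommGroup C] [Module 𝕂 C]
  [AddCommGroup D] [Module 𝕂 D] {k : ℕ} {g : (Fin k → C) → D}

lemma multilin_update_zero (hg : IsMultilin 𝕂 g) (α : Fin k → C) (j : Fin k) :
    g (Function.update α j 0) = 0 := by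
  have h := hg.2 α j 0 0
  rw [zero_smul, zero_smul] at h
  exact h

lemma multilin_zero_entry (hg : IsMultilin 𝕂 g) (α : Fin k → C) (j : Fin k)
    (h : α j = 0) : g α = 0 := by
  have h2 : α = Function.update α j 0 := by rw [← h, Function.update_eq_self]
  rw [h2, multilin_update_zero hg]

lemma multilin_smul_entry (hg : IsMultilin 𝕂 g) (α : Fin k → C) (j : Fin k) (c : 𝕂) (x : C)
    (h : α j = c • x) : g α = c • g (Function.update α j x) := by
  have h2 : α = Function.update α j (c • x) := by rw [← h, Function.update_eq_self]
  rw [h2, hg.2, Function.update_idem]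

lemma multilin_update_sum (hg : IsMultilin 𝕂 g) (α : Fin k → C) (j : Fin k)
    {ι : Type*} (S : Finset ι) (v : ι → C) :
    g (Function.update α j (∑ s ∈ S, v s)) = ∑ s ∈ S, g (Function.update α j (v s)) := by
  classical
  induction S using Finset.induction with
  | empty => simpa using multilin_update_zero hg α j
  | insert _ _ hns ih => rw [Finset.sum_insert hns, hg.1, ih, Finset.sum_insert hns]

end Multilin

section Ext
variable {𝕂 : Type} [Field 𝕂] {N : ℕ} {C D : Type} [AddCommGroup C] [Module 𝕂 C]
  [AddCommGroup D] [Module 𝕂 D] (ℳ : ZMod N → Submodule 𝕂 C) [DirectSum.Decomposition ℳ]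

lemma multilin_eq_of_homog {k : ℕ} {g h : (Fin k → C) → D}
    (hg : IsMultilin 𝕂 g) (hh : IsMultilin 𝕂 h)
    (H : ∀ (d : Fin k → ZMod N) (α : Fin k → C), (∀ i, α i ∈ ℳ (d i)) → g α = h α) :
    ∀ α, g α = h α := by
  classical
  suffices Ps : ∀ (n : ℕ) (α : Fin k → C),
      (∀ i : Fin k, n ≤ (i : ℕ) → ∃ e, α i ∈ ℳ e) → g α = h α by
    intro α
    exact Ps k α (fun i hi => absurd i.isLt (by omega))
  intro n
  induction n with
  | zero =>
    intro α hα
    have hα0 : ∀ i : Fin k, ∃ e, α i ∈ ℳ e := fun i => hα i (Nat.zero_le _)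
    exact H (fun i => (hα0 i).choose) α (fun i => (hα0 i).choose_spec)
  | succ n ih =>
    intro α hα
    by_cases hn : n < k
    · set i : Fin k := ⟨n, hn⟩ with hidef
      have hxd := DirectSum.sum_support_decompose ℳ (α i)
      have hstep : ∀ s ∈ (DirectSum.decompose ℳ (α i)).support,
          g (Function.update α i ((DirectSum.decompose ℳ (α i)) s : C)) =
          h (Function.update α i ((DirectSum.decompose ℳ (α i)) s : C)) := by
        intro s _
        apply ih
        intro i' hi'
        by_cases hii : i' = i
        · subst hii
          exact ⟨s, by simp [SetLike.coe_mem]⟩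
        · have : (i' : ℕ) ≠ n := fun hc => hii (Fin.ext hc)
          rw [Function.update_of_ne hii]
          exact hα i' (by omega)
      have hsumg := multilin_update_sum hg α i (DirectSum.decompose ℳ (α i)).support
        (fun s => ((DirectSum.decompose ℳ (α i)) s : C))
      have hsumh := multilin_update_sum hh α i (DirectSum.decompose ℳ (α i)).support
        (fun s => ((DirectSum.decompose ℳ (α i)) s : C))
      calc g α = g (Function.update α i (∑ s ∈ (DirectSum.decompose ℳ (α i)).support,
              ((DirectSum.decompose ℳ (α i)) s : C))) := by rw [hxd, Function.update_eq_self]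
        _ = ∑ s ∈ (DirectSum.decompose ℳ (α i)).support,
              g (Function.update α i ((DirectSum.decompose ℳ (α i)) s : C)) := hsumg
        _ = ∑ s ∈ (DirectSum.decompose ℳ (α i)).support,
              h (Function.update α i ((DirectSum.decompose ℳ (α i)) s : C)) :=
              Finset.sum_congr rfl hstep
        _ = h (Function.update α i (∑ s ∈ (DirectSum.decompose ℳ (α i)).support,
              ((DirectSum.decompose ℳ (α i)) s : C))) := hsumh.symm
        _ = h α := by rw [hxd, Function.update_eq_self]
    · exact ih α (fun i hi => hα i (by omega))

end Ext

section Finsum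
lemma finsum_mem_eq_finset_sum {ι M : Type*} [AddCommMonoid M] (g : ι → M) (S : Set ι)
    (T : Finset ι) (hTS : ∀ t ∈ T, t ∈ S) (hz : ∀ t ∈ S, t ∉ T → g t = 0) :
    ∑ᶠ t ∈ S, g t = ∑ t ∈ T, g t := by
  apply finsum_mem_eq_sum_of_inter_support_eq
  ext x
  simp only [Set.mem_inter_iff, Function.mem_support, Finset.coe_sort_coe, Finset.mem_coe]
  constructor
  · rintro ⟨hxS, hxs⟩
    refine ⟨?_, hxs⟩
    by_contra hxT
    exact hxs (hz x hxS hxT)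
  · rintro ⟨hxT, hxs⟩
    exact ⟨hTS x hxT, hxs⟩

lemma finsum_mem_zero' {ι M : Type*} [AddCommMonoid M] (g : ι → M) (S : Set ι)
    (hz : ∀ t ∈ S, g t = 0) : ∑ᶠ t ∈ S, g t = 0 := by
  rw [finsum_mem_eq_finset_sum g S ∅ (by simp) (fun t ht _ => hz t ht)]
  simp
end Finsum

section Gind
lemma G_strong_induction (G : AddSubmonoid ℝ)
    (hGfin : ∀ E : ℝ, {x : ℝ | x ∈ G ∧ x ≤ E}.Finite) (P : G → Prop)
    (step : ∀ β : G, (∀ β' : G, (β' : ℝ) < (β : ℝ) → P β') → P β) : ∀ β, P β := by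
  classical
  have key : ∀ (n : ℕ) (β : G), ((hGfin β).toFinset.card ≤ n) → P β := by
    intro n
    induction n with
    | zero =>
      intro β hcard
      exfalso
      have hmem : (β : ℝ) ∈ (hGfin β).toFinset := by
        rw [Set.Finite.mem_toFinset]; exact ⟨β.2, le_rfl⟩
      have := Finset.card_pos.2 ⟨_, hmem⟩
      omega
    | succ n ih =>
      intro β hcard
      apply step
      intro β' hlt
      apply ih
      have hss : (hGfin β').toFinset ⊂ (hGfin β).toFinset := by
        rw [Set.Finite.toFinset_ssubset_toFinset]
        constructor
        · intro x hx
          exact ⟨hx.1, le_trans hx.2 (le_of_lt hlt)⟩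
        · intro hsup
          have : (β : ℝ) ∈ {x : ℝ | x ∈ G ∧ x ≤ (β' : ℝ)} := hsup ⟨β.2, le_rfl⟩
          exact absurd this.2 (not_le.2 hlt)
      have := Finset.card_lt_card hss
      omega
  intro β
  exact key _ β le_rfl
end Gind

section Infra
variable {𝕂 : Type} [Field 𝕂] {N : ℕ} {G : AddSubmonoid ℝ} {C : Type}
  [AddCommGroup C] [Module 𝕂 C]

lemma extZ_lt {X : Type} [Zero X] {k : ℕ} (α : Fin k → X) (n : ℕ) (h : n < k) :
    extZ α n = α ⟨n, h⟩ := dif_pos h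

lemma extZ_fin {X : Type} [Zero X] {k : ℕ} (α : Fin k → X) (i : Fin k) :
    extZ α (i : ℕ) = α i := by rw [extZ_lt α _ i.isLt]

lemma extZ_ge {X : Type} [Zero X] {k : ℕ} (α : Fin k → X) (n : ℕ) (h : k ≤ n) :
    extZ α n = 0 := dif_neg (by omega)

lemma insArg_at {X : Type} [Zero X] (k₁ k₂ i₀ : ℕ) (v : X) (A : ℕ → X) (h : i₀ < k₁) :
    insArg k₁ k₂ i₀ v A ⟨i₀, h⟩ = v := by simp [insArg]

lemma insArg_update {X : Type} [Zero X] (k₁ k₂ i₀ : ℕ) (v w : X) (A : ℕ → X) (h : i₀ < k₁) :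
    insArg k₁ k₂ i₀ v A = Function.update (insArg k₁ k₂ i₀ w A) ⟨i₀, h⟩ v := by
  funext j
  by_cases hj : j = ⟨i₀, h⟩
  · subst hj; rw [Function.update_self, insArg_at]
  · rw [Function.update_of_ne hj]
    have hj' : (j : ℕ) ≠ i₀ := fun hc => hj (Fin.ext hc)
    by_cases hlt : (j : ℕ) < i₀ <;> simp [insArg, hlt, hj']

lemma filter_lt_card (l : ℕ) (i : Fin l) :
    (Finset.univ.filter (fun j' : Fin l => (j' : ℕ) < (i : ℕ))).card = (i : ℕ) := by
  have : (Finset.univ.filter (fun j' : Fin l => (j' : ℕ) < (i : ℕ))) = Finset.Iio i := by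
    ext x
    simp only [Finset.mem_filter, Finset.mem_Iio, Finset.mem_univ, true_and, Fin.lt_def]
  rw [this, Fin.card_Iio]

-- chunkOff for the constant-one arity tuple
lemma chunkOff_const_one (l : ℕ) (i : Fin l) : chunkOff (fun _ => 1) i = (i : ℕ) := by
  unfold chunkOff
  rw [Finset.sum_const, smul_eq_mul, mul_one, filter_lt_card]

lemma chunkOff_zero {l : ℕ} (r : Fin l → ℕ) (h0 : 0 < l) : chunkOff r ⟨0, h0⟩ = 0 := by
  unfold chunkOff
  apply Finset.sum_eq_zero; intro x hx; simp at hx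

lemma chunkOff_fin2_one (r : Fin 2 → ℕ) : chunkOff r 1 = r 0 := by
  unfold chunkOff
  have : (Finset.univ.filter (fun j' : Fin 2 => (j' : ℕ) < ((1 : Fin 2) : ℕ))) = {0} := by decide
  rw [this, Finset.sum_singleton]

lemma sum_ge_card {l : ℕ} (r : Fin l → ℕ) (h : ∀ j, 1 ≤ r j) : l ≤ ∑ j, r j := by
  calc l = ∑ _j : Fin l, 1 := by simp
    _ ≤ ∑ j, r j := Finset.sum_le_sum (fun j _ => h j)

lemma G_coe_inj {a b : G} (h : (a : ℝ) = (b : ℝ)) : a = b := by exact_mod_cast h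

lemma G_coe_sum {l : ℕ} (v : Fin l → G) : ((∑ j, v j : G) : ℝ) = ∑ j, (v j : ℝ) := by
  exact_mod_cast AddSubmonoidClass.coe_finset_sum v Finset.univ

-- term-vanishing lemmas
lemma homTerm_zero_of_chunk_zero {D : Type} [AddCommGroup D] [Module 𝕂 D]
    (mm : ∀ l : ℕ, G → (Fin l → C) → D) (f : ∀ k : ℕ, G → (Fin k → C) → C)
    (hmlin : ∀ l β, IsMultilin 𝕂 (mm l β)) {k : ℕ} (α : Fin k → C)
    (t : Σ l : ℕ, (Fin l → ℕ) × G × (Fin l → G)) (j₀ : Fin t.1)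
    (hz : f (t.2.1 j₀) (t.2.2.2 j₀) (fun x => extZ α (chunkOff t.2.1 j₀ + (x : ℕ))) = 0) :
    homTerm mm f α t = 0 :=
  multilin_zero_entry (hmlin _ _) _ j₀ hz

lemma ainfTerm_zero_of_inner_zero
    (f : ∀ k : ℕ, G → (Fin k → C) → C) (mm : ∀ k : ℕ, G → (Fin k → C) → C)
    (hflin : ∀ l β, IsMultilin 𝕂 (f l β)) {k : ℕ} (d : Fin k → ZMod N) (α : Fin k → C)
    (t : ℕ × ℕ × ℕ × G × G) (h : t.2.2.1 < t.1)
    (hz : mm t.2.1 t.2.2.2.2 (fun l => extZ α (t.2.2.1 + (l : ℕ))) = 0) :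
    ainfTerm 𝕂 f mm d α t = 0 := by
  unfold ainfTerm
  rw [multilin_zero_entry (hflin _ _) _ ⟨t.2.2.1, h⟩ (by rw [insArg_at]; exact hz), smul_zero]

lemma zero_multilin {D : Type} [AddCommGroup D] [Module 𝕂 D] {k : ℕ} :
    IsMultilin 𝕂 (fun (_ : Fin k → C) => (0 : D)) := by
  constructor <;> intros <;> simp

end Infra

section FlatMin
variable {𝕂 : Type} [Field 𝕂] {N : ℕ} {G : AddSubmonoid ℝ} {C : Type}
  [AddCommGroup C] [Module 𝕂 C] {ℳ : ZMod N → Submodule 𝕂 C}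
  (hGnn : ∀ x ∈ G, (0 : ℝ) ≤ x) (hGfin : ∀ E : ℝ, {x : ℝ | x ∈ G ∧ x ≤ E}.Finite)
  {m : ∀ k : ℕ, G → (Fin k → C) → C} {f : ∀ k : ℕ, G → (Fin k → C) → C}
  {m' : ∀ k : ℕ, G → (Fin k → C) → C}
  (hmlin : ∀ (k : ℕ) (β : G), IsMultilin 𝕂 (m k β))
  (hflin : ∀ (k : ℕ) (β : G), IsMultilin 𝕂 (f k β))
  (hflat : ∀ β : G, m 0 β = 0) (hmin : ∀ β : G, m 1 β = 0)
  (hf0 : ∀ β : G, f 0 β = 0) (hf10 : ∀ α : Fin 1 → C, f 1 0 α = α 0)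
  (hcomp : ∀ (k : ℕ) (β : G) (d : Fin k → ZMod N) (α : Fin k → C), (∀ j, α j ∈ ℳ (d j)) →
    (∑ᶠ t ∈ homIdx G k β, homTerm m f α t) = ∑ᶠ t ∈ ainfIdx G k β, ainfTerm 𝕂 f m' d α t)

include hGnn hGfin hmlin hflin hflat hf0 hf10 hcomp in
/-- The pull-back of a flat structure is flat. -/
lemma pullback_flat : ∀ (β : G) (x : Fin 0 → C), m' 0 β x = 0 := by
  classical
  refine G_strong_induction G hGfin _ ?_
  intro β IH x
  have hd : ∀ j : Fin 0, x j ∈ ℳ ((fun i : Fin 0 => i.elim0) j) := fun j => j.elim0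
  have hrel := hcomp 0 β (fun i => i.elim0) x hd
  -- LHS is zero
  have hL : (∑ᶠ t ∈ homIdx G 0 β, homTerm m f x t) = 0 := by
    apply finsum_mem_zero'
    rintro ⟨l, r, β₀, βs⟩ ht
    simp only [homIdx, Set.mem_setOf_eq] at ht
    match l, r, βs with
    | 0, r, βs => exact congrFun (hflat β₀) _
    | (l' + 1), r, βs =>
      have hr0 : r 0 = 0 := by
        have := Finset.sum_eq_zero_iff.1 ht.1 0 (Finset.mem_univ 0)
        exact this
      have key : ∀ (n : ℕ), n = 0 → ∀ (βx : G) (A : Fin n → C), f n βx A = 0 := by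
        rintro n rfl βx A; exact congrFun (hf0 βx) A
      exact homTerm_zero_of_chunk_zero m f hmlin x ⟨l' + 1, r, β₀, βs⟩ 0
        (key (r 0) hr0 (βs 0) _)
  -- RHS is the single term
  have hmem : ((1, 0, 0, (0 : G), β) : ℕ × ℕ × ℕ × G × G) ∈ ainfIdx G 0 β :=
    ⟨rfl, Nat.zero_lt_one, zero_add β⟩
  have hR : (∑ᶠ t ∈ ainfIdx G 0 β, ainfTerm 𝕂 f m' ((fun i => i.elim0) : Fin 0 → ZMod N) x t) =
      m' 0 β x := by
    rw [finsum_mem_eq_finset_sum _ _ {((1, 0, 0, (0 : G), β) : ℕ × ℕ × ℕ × G × G)}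
      (by intro t ht; rw [Finset.mem_singleton] at ht; subst ht; exact hmem) ?_]
    · rw [Finset.sum_singleton]
      unfold ainfTerm insSign
      simp only [Finset.range_zero, Finset.sum_empty, sgn2_zero, one_smul]
      rw [hf10]
      show insArg 1 0 0 _ (extZ x) ⟨0, Nat.zero_lt_one⟩ = _
      rw [insArg_at]
      exact congrArg (m' 0 β) (funext fun i => i.elim0)
    · rintro ⟨k₁, k₂, i₀, β₁, β₂⟩ ht hnot
      obtain ⟨h1, h2, h3⟩ := ht
      dsimp only at h1 h2 h3
      simp only [Finset.mem_singleton, Prod.mk.injEq] at hnot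
      have hk1 : k₁ = 1 := by omega
      have hk2 : k₂ = 0 := by omega
      have hi0 : i₀ = 0 := by omega
      subst hk1; subst hk2; subst hi0
      have hβ2ne : β₂ ≠ β := by
        intro hc
        subst hc
        have hβ1 : β₁ = 0 := by
          apply G_coe_inj
          have hco := congrArg (fun x : G => (x : ℝ)) h3
          push_cast at hco
          rw [show ((0 : G) : ℝ) = (0 : ℝ) from rfl]
          linarith
        exact hnot ⟨rfl, rfl, rfl, hβ1, rfl⟩
      have hβ2lt : (β₂ : ℝ) < (β : ℝ) := by
        have hcoe := congrArg (fun x : G => (x : ℝ)) h3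
        push_cast at hcoe
        have h1nn := hGnn _ β₁.2
        rcases lt_or_eq_of_le (by linarith : (β₂ : ℝ) ≤ (β : ℝ)) with h | h
        · exact h
        · exact absurd (G_coe_inj h) hβ2ne
      exact ainfTerm_zero_of_inner_zero f m' hflin _ x _ Nat.zero_lt_one (IH β₂ hβ2lt _)
  rw [hL, hR] at hrel
  exact hrel.symm

variable [DirectSum.Decomposition ℳ]
  (hm'lin : ∀ (k : ℕ) (β : G), IsMultilin 𝕂 (m' k β))
  (hm'flat : ∀ (β : G) (x : Fin 0 → C), m' 0 β x = 0)

include hGnn hGfin hmlin hflin hmin hf0 hf10 hcomp hm'lin hm'flat in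
/-- The pull-back of a minimal structure is minimal. -/
lemma pullback_min : ∀ (β : G) (α : Fin 1 → C), m' 1 β α = 0 := by
  classical
  refine G_strong_induction G hGfin _ ?_
  intro β IH
  have hfkey : ∀ (n : ℕ), n = 0 → ∀ (βx : G) (A : Fin n → C), f n βx A = 0 := by
    rintro n rfl βx A; exact congrFun (hf0 βx) A
  have hhom : ∀ (d : Fin 1 → ZMod N) (α : Fin 1 → C), (∀ i, α i ∈ ℳ (d i)) →
      m' 1 β α = 0 := by
    intro d α hα
    have hrel := hcomp 1 β d α hα
    have hL : (∑ᶠ t ∈ homIdx G 1 β, homTerm m f α t) = 0 := by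
      apply finsum_mem_zero'
      rintro ⟨l, r, β₀, βs⟩ ⟨h1, h2⟩
      dsimp only at h1 h2
      by_cases hall : ∀ j, 1 ≤ r j
      · have hl := sum_ge_card r hall
        rw [h1] at hl
        rcases (by omega : l = 0 ∨ l = 1) with rfl | rfl
        · exfalso; simp at h1
        · exact congrFun (hmin β₀) _
      · push_neg at hall
        obtain ⟨j₀, hj₀⟩ := hall
        exact homTerm_zero_of_chunk_zero m f hmlin α ⟨l, r, β₀, βs⟩ j₀
          (hfkey (r j₀) (by omega) (βs j₀) _)
    have hmem : ((1, 1, 0, (0 : G), β) : ℕ × ℕ × ℕ × G × G) ∈ ainfIdx G 1 β :=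
      ⟨rfl, Nat.zero_lt_one, zero_add β⟩
    have hR : (∑ᶠ t ∈ ainfIdx G 1 β, ainfTerm 𝕂 f m' d α t) = m' 1 β α := by
      rw [finsum_mem_eq_finset_sum _ _ {((1, 1, 0, (0 : G), β) : ℕ × ℕ × ℕ × G × G)}
        (by intro t ht; rw [Finset.mem_singleton] at ht; subst ht; exact hmem) ?_]
      · rw [Finset.sum_singleton]
        unfold ainfTerm insSign
        simp only [Finset.range_zero, Finset.sum_empty, sgn2_zero, one_smul]
        rw [hf10]
        show insArg 1 1 0 _ (extZ α) ⟨0, Nat.zero_lt_one⟩ = _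
        rw [insArg_at]
        congr 1
        funext l
        have h0 : ((l : ℕ)) < 1 := l.isLt
        rw [show (0 + (l : ℕ)) = (l : ℕ) from by omega, extZ_fin]
      · rintro ⟨k₁, k₂, i₀, β₁, β₂⟩ ht hnot
        obtain ⟨h1, h2, h3⟩ := ht
        dsimp only at h1 h2 h3
        simp only [Finset.mem_singleton, Prod.mk.injEq] at hnot
        rcases (by omega : k₂ = 0 ∨ k₂ = 1) with rfl | rfl
        · exact ainfTerm_zero_of_inner_zero f m' hflin d α _ h2 (hm'flat β₂ _)
        · have hk1 : k₁ = 1 := by omega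
          have hi0 : i₀ = 0 := by omega
          subst hk1; subst hi0
          by_cases hβ2 : β₂ = β
          · subst hβ2
            have hβ1 : β₁ = 0 := by
              apply G_coe_inj
              have hco := congrArg (fun x : G => (x : ℝ)) h3
              push_cast at hco
              rw [show ((0 : G) : ℝ) = (0 : ℝ) from rfl]
              linarith
            exact absurd ⟨rfl, rfl, rfl, hβ1, rfl⟩ hnot
          · have hβ2lt : (β₂ : ℝ) < (β : ℝ) := by
              have hco := congrArg (fun x : G => (x : ℝ)) h3
              push_cast at hco
              have h1nn := hGnn _ β₁.2
              rcases lt_or_eq_of_le (by linarith : (β₂ : ℝ) ≤ (β : ℝ)) with h | h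
              · exact h
              · exact absurd (G_coe_inj h) hβ2
            exact ainfTerm_zero_of_inner_zero f m' hflin d α _ h2 (IH β₂ hβ2lt _)
    rw [hL, hR] at hrel
    exact hrel.symm
  exact multilin_eq_of_homog ℳ (hm'lin 1 β) zero_multilin hhom

end FlatMin

section Part1
variable {𝕂 : Type} [Field 𝕂] {N : ℕ} {G : AddSubmonoid ℝ} {C : Type}
  [AddCommGroup C] [Module 𝕂 C] {ℳ : ZMod N → Submodule 𝕂 C}
  (hGnn : ∀ x ∈ G, (0 : ℝ) ≤ x)
  {m : ∀ k : ℕ, G → (Fin k → C) → C} {f : ∀ k : ℕ, G → (Fin k → C) → C}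
  {m' : ∀ k : ℕ, G → (Fin k → C) → C}
  (hmlin : ∀ (k : ℕ) (β : G), IsMultilin 𝕂 (m k β))
  (hflin : ∀ (k : ℕ) (β : G), IsMultilin 𝕂 (f k β))
  (hmin : ∀ β : G, m 1 β = 0)
  (hf0 : ∀ β : G, f 0 β = 0) (hf10 : ∀ α : Fin 1 → C, f 1 0 α = α 0)
  (hcomp : ∀ (k : ℕ) (β : G) (d : Fin k → ZMod N) (α : Fin k → C), (∀ j, α j ∈ ℳ (d j)) →
    (∑ᶠ t ∈ homIdx G k β, homTerm m f α t) = ∑ᶠ t ∈ ainfIdx G k β, ainfTerm 𝕂 f m' d α t)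
  (hm'flat : ∀ (β : G) (x : Fin 0 → C), m' 0 β x = 0)
  (hm'min : ∀ (β : G) (α : Fin 1 → C), m' 1 β α = 0)

lemma G_zero_nonneg (hGnn : ∀ x ∈ G, (0 : ℝ) ≤ x) (a : G) : (0 : ℝ) ≤ (a : ℝ) :=
  hGnn _ a.2

include hGnn in
lemma G_pair_zero {a b : G} (h : a + b = 0) : a = 0 ∧ b = 0 := by
  have hco := congrArg (fun x : G => (x : ℝ)) h
  push_cast at hco
  have ha := hGnn _ a.2
  have hb := hGnn _ b.2
  constructor <;> apply G_coe_inj <;> rw [show ((0 : G) : ℝ) = (0 : ℝ) from rfl] <;> linarith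

include hGnn in
lemma G_sum_zero {l : ℕ} (v : Fin l → G) (h : (∑ j, v j) = 0) : ∀ j, v j = 0 := by
  intro j
  have hco : (∑ j, ((v j : ℝ))) = 0 := by
    rw [← G_coe_sum, h]; rfl
  have hnn : ∀ i : Fin l, (0:ℝ) ≤ (v i : ℝ) := fun i => hGnn _ (v i).2
  have hle := Finset.single_le_sum (f := fun i : Fin l => (v i : ℝ))
    (fun i _ => hnn i) (Finset.mem_univ j)
  apply G_coe_inj
  rw [show ((0 : G) : ℝ) = (0 : ℝ) from rfl]
  linarith [hnn j]

include hGnn hmlin hflin hmin hf0 hf10 hcomp hm'flat hm'min in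
lemma pullback_two_homog : ∀ (d : Fin 2 → ZMod N) (α : Fin 2 → C), (∀ i, α i ∈ ℳ (d i)) →
    m' 2 0 α = m 2 0 α := by
  classical
  intro d α hα
  have hfkey : ∀ (n : ℕ), n = 0 → ∀ (βx : G) (A : Fin n → C), f n βx A = 0 := by
    rintro n rfl βx A; exact congrFun (hf0 βx) A
  have hrel := hcomp 2 0 d α hα
  -- LHS = m 2 0 α
  set t0 : Σ l : ℕ, (Fin l → ℕ) × G × (Fin l → G) :=
    ⟨2, (fun _ => 1), 0, (fun _ => 0)⟩ with ht0def
  have hL : (∑ᶠ t ∈ homIdx G 2 0, homTerm m f α t) = m 2 0 α := by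
    rw [finsum_mem_eq_finset_sum _ _ {t0} ?_ ?_]
    · rw [Finset.sum_singleton]
      unfold homTerm
      show m 2 0 _ = m 2 0 α
      congr 1
      funext j
      rw [hf10]
      show extZ α (chunkOff (fun _ => 1) j + ((0 : Fin 1) : ℕ)) = α j
      rw [chunkOff_const_one]
      show extZ α ((j : ℕ) + 0) = α j
      rw [Nat.add_zero, extZ_fin]
    · intro t ht
      rw [Finset.mem_singleton] at ht
      subst ht
      refine ⟨by simp +zetaDelta, ?_⟩
      show (0 : G) + ∑ _j : Fin 2, (0 : G) = 0
      simp
    · rintro ⟨l, r, β₀, βs⟩ ⟨h1, h2⟩ hnot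
      dsimp only at h1 h2
      by_cases hall : ∀ j, 1 ≤ r j
      · have hl := sum_ge_card r hall
        rw [h1] at hl
        rcases (by omega : l = 0 ∨ l = 1 ∨ l = 2) with rfl | rfl | rfl
        · exfalso; simp at h1
        · exact congrFun (hmin β₀) _
        · exfalso
          apply hnot
          rw [Finset.mem_singleton, ht0def]
          have hβ0 : β₀ = 0 ∧ ∀ j : Fin 2, βs j = 0 := by
            have hs : β₀ + ∑ j, βs j = 0 := h2
            obtain ⟨hb0, hbs⟩ := G_pair_zero hGnn hs
            refine ⟨hb0, fun j => G_sum_zero hGnn βs hbs j⟩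
          have hr : r = fun _ => 1 := by
            funext j
            have h1' : r 0 + r 1 = 2 := by rw [← Fin.sum_univ_two]; exact h1
            have ha0 := hall 0
            have ha1 := hall 1
            rcases (by omega : (j : ℕ) = 0 ∨ (j : ℕ) = 1) with hj | hj
            · rw [show j = 0 from Fin.ext hj]; omega
            · rw [show j = 1 from Fin.ext hj]; omega
          have hβs : βs = fun _ => 0 := funext hβ0.2
          rw [hr, hβ0.1, hβs]
      · push_neg at hall
        obtain ⟨j₀, hj₀⟩ := hall
        exact homTerm_zero_of_chunk_zero m f hmlin α ⟨l, r, β₀, βs⟩ j₀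
          (hfkey (r j₀) (by omega) (βs j₀) _)
  -- RHS = m' 2 0 α
  have hR : (∑ᶠ t ∈ ainfIdx G 2 0, ainfTerm 𝕂 f m' d α t) = m' 2 0 α := by
    rw [finsum_mem_eq_finset_sum _ _ {((1, 2, 0, (0 : G), (0 : G)) : ℕ × ℕ × ℕ × G × G)}
      ?_ ?_]
    · rw [Finset.sum_singleton]
      unfold ainfTerm insSign
      simp only [Finset.range_zero, Finset.sum_empty, sgn2_zero, one_smul]
      rw [hf10]
      show insArg 1 2 0 _ _ ⟨0, Nat.zero_lt_one⟩ = _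
      rw [insArg_at]
      congr 1
      funext l
      rw [show (0 + (l : ℕ)) = (l : ℕ) from by omega, extZ_fin]
    · intro t ht
      rw [Finset.mem_singleton] at ht
      subst ht
      exact ⟨rfl, Nat.zero_lt_one, zero_add 0⟩
    · rintro ⟨k₁, k₂, i₀, β₁, β₂⟩ ⟨h1, h2, h3⟩ hnot
      dsimp only at h1 h2 h3
      simp only [Finset.mem_singleton, Prod.mk.injEq] at hnot
      obtain ⟨hβ1, hβ2⟩ := G_pair_zero hGnn h3
      rcases (by omega : k₂ = 0 ∨ k₂ = 1 ∨ k₂ = 2) with rfl | rfl | rfl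
      · exact ainfTerm_zero_of_inner_zero f m' hflin d α _ h2 (hm'flat β₂ _)
      · exact ainfTerm_zero_of_inner_zero f m' hflin d α _ h2 (hm'min β₂ _)
      · exact absurd ⟨by omega, rfl, by omega, hβ1, hβ2⟩ hnot
  rw [hL, hR] at hrel
  exact hrel.symm
end Part1

section Part2
variable {𝕂 : Type} [Field 𝕂] {N : ℕ} {G : AddSubmonoid ℝ} {C : Type}
  [AddCommGroup C] [Module 𝕂 C] {ℳ : ZMod N → Submodule 𝕂 C}

lemma extZ_homog {k : ℕ} (d : Fin k → ZMod N) (α : Fin k → C)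
    (hα : ∀ i, α i ∈ ℳ (d i)) (n : ℕ) : extZ α n ∈ ℳ (extZ d n) := by
  by_cases h : n < k
  · rw [extZ_lt α n h, extZ_lt d n h]; exact hα _
  · rw [extZ_ge α n (by omega), extZ_ge d n (by omega)]; exact Submodule.zero_mem _

lemma insArg_update_self {X : Type} [Zero X] (k₁ k₂ i₀ : ℕ) (v : X) (A : ℕ → X)
    (h : i₀ < k₁) :
    Function.update (insArg k₁ k₂ i₀ v A) ⟨i₀, h⟩ v = insArg k₁ k₂ i₀ v A :=
  (insArg_update k₁ k₂ i₀ v v A h).symm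

lemma e_val (hN : 2 ∣ N) (j : ℕ) :
    par2 (((1 - (j : ℤ)) : ℤ) : ZMod N) + ((j : ℕ) : ZMod 2) = 1 := by
  rw [par2_intCast hN]
  push_cast
  ring

lemma par2_zero (hN : 2 ∣ N) : par2 (0 : ZMod N) = 0 := by
  have := par2_natCast hN 0
  simpa using this

lemma par2_sum (hN : 2 ∣ N) {ι : Type*} (s : Finset ι) (g : ι → ZMod N) :
    par2 (∑ i ∈ s, g i) = ∑ i ∈ s, par2 (g i) := by
  classical
  induction s using Finset.induction with
  | empty => simpa using par2_zero hN
  | insert _ _ hns ih =>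
    rw [Finset.sum_insert hns, Finset.sum_insert hns, par2_add hN, ih]

variable (hN : 2 ∣ N) (hGnn : ∀ x ∈ G, (0 : ℝ) ≤ x)
  {m : ∀ k : ℕ, G → (Fin k → C) → C} {f : ∀ k : ℕ, G → (Fin k → C) → C}
  {m' : ∀ k : ℕ, G → (Fin k → C) → C}
  (hmlin : ∀ (k : ℕ) (β : G), IsMultilin 𝕂 (m k β))
  (hflin : ∀ (k : ℕ) (β : G), IsMultilin 𝕂 (f k β))
  (hflat : ∀ β : G, m 0 β = 0) (hmin : ∀ β : G, m 1 β = 0)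
  (hf0 : ∀ β : G, f 0 β = 0) (hf10 : ∀ α : Fin 1 → C, f 1 0 α = α 0)
  (hcomp : ∀ (k : ℕ) (β : G) (d : Fin k → ZMod N) (α : Fin k → C), (∀ j, α j ∈ ℳ (d j)) →
    (∑ᶠ t ∈ homIdx G k β, homTerm m f α t) = ∑ᶠ t ∈ ainfIdx G k β, ainfTerm 𝕂 f m' d α t)
  (hm'flat : ∀ (β : G) (x : Fin 0 → C), m' 0 β x = 0)
  (hm'min : ∀ (β : G) (α : Fin 1 → C), m' 1 β α = 0)
  (hm'two : ∀ (d : Fin 2 → ZMod N) (α : Fin 2 → C), (∀ i, α i ∈ ℳ (d i)) →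
    m' 2 0 α = m 2 0 α)
  {ν₀ : ℝ} (hν : 2 < ν₀)
  (hfν : ∀ (k : ℕ) (β : G), 1 < (k : ℝ) + (β : ℝ) → (k : ℝ) + (β : ℝ) < ν₀ - 1 → f k β = 0)
  (hmν : ∀ (k : ℕ) (β : G), 2 < (k : ℝ) + (β : ℝ) → (k : ℝ) + (β : ℝ) < ν₀ → m k β = 0)
  (hm'ν : ∀ (k' : ℕ) (β' : G), 2 < (k' : ℝ) + (β' : ℝ) → (k' : ℝ) + (β' : ℝ) < ν₀ →
    m' k' β' = 0)
  {j : ℕ} {β : G} (hjβ : ((j + 1 : ℕ) : ℝ) + (β : ℝ) = ν₀)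

include hN hGnn hmlin hflin hflat hmin hf0 hf10 hcomp hm'flat hm'min hm'two hν hfν hmν hm'ν hjβ in
lemma pullback_obstruction_main :
    ∀ (d : Fin (j + 1) → ZMod N) (α : Fin (j + 1) → C), (∀ i, α i ∈ ℳ (d i)) →
      m' (j + 1) β α = m (j + 1) β α +
        hochB 𝕂 (ulP 𝕂 m) (par2 (((1 - (j : ℤ)) : ℤ) : ZMod N) + (j : ZMod 2))
          (((1 - (j : ℤ)) : ℤ) : ZMod N) (f j β) d α := by
  classical
  intro d α hα
  have hβval : (β : ℝ) = ν₀ - ((j : ℝ) + 1) := by push_cast at hjβ; linarith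
  have hrel := hcomp (j + 1) β d α hα
  have hfkey : ∀ (n : ℕ), n = 0 → ∀ (βx : G) (A : Fin n → C), f n βx A = 0 := by
    rintro n rfl βx A; exact congrFun (hf0 βx) A
  -- the three surviving indices on the composition side
  set tAll : Σ l : ℕ, (Fin l → ℕ) × G × (Fin l → G) :=
    ⟨j + 1, (fun _ => 1), β, (fun _ => 0)⟩ with htAlldef
  set tA : Σ l : ℕ, (Fin l → ℕ) × G × (Fin l → G) := ⟨2, ![j, 1], 0, ![β, 0]⟩ with htAdef
  set tB : Σ l : ℕ, (Fin l → ℕ) × G × (Fin l → G) := ⟨2, ![1, j], 0, ![0, β]⟩ with htBdef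
  have hAllne : ∀ (r : Fin 2 → ℕ) (βs : Fin 2 → G), tAll ≠ ⟨2, r, 0, βs⟩ := by
    intro r βs h
    rw [htAlldef, Sigma.ext_iff] at h
    obtain ⟨hfst, hsnd⟩ := h
    dsimp only at hfst hsnd
    have hj1 : j = 1 := by omega
    subst hj1
    have h2 := eq_of_heq hsnd
    have hβ0 : β = 0 := by
      have := congrArg (fun p : (Fin 2 → ℕ) × G × (Fin 2 → G) => p.2.1) h2
      exact this
    have : (β : ℝ) = 0 := by rw [hβ0]; rfl
    rw [hβval] at this
    norm_num at this
    linarith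
  have hABne : tA ≠ tB := by
    intro h
    rw [htAdef, htBdef, Sigma.ext_iff] at h
    have h2 := eq_of_heq h.2
    have hr := congrArg (fun p : (Fin 2 → ℕ) × G × (Fin 2 → G) => p.1 0) h2
    simp only [Matrix.cons_val_zero] at hr
    subst hr
    have hβs := congrArg (fun p : (Fin 2 → ℕ) × G × (Fin 2 → G) => p.2.2 0) h2
    simp only [Matrix.cons_val_zero] at hβs
    have : (β : ℝ) = 0 := by rw [hβs]; rfl
    rw [hβval] at this
    norm_num at this
    linarith
  -- evaluate the composition side
  have hL : (∑ᶠ t ∈ homIdx G (j + 1) β, homTerm m f α t) =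
      homTerm m f α tAll + (homTerm m f α tA + homTerm m f α tB) := by
    rw [finsum_mem_eq_finset_sum _ _ {tAll, tA, tB} ?_ ?_]
    · rw [Finset.sum_insert (by
          simp only [Finset.mem_insert, Finset.mem_singleton]
          push_neg
          exact ⟨hAllne _ _, hAllne _ _⟩),
        Finset.sum_insert (by simpa using hABne), Finset.sum_singleton]
    · intro t ht
      simp only [Finset.mem_insert, Finset.mem_singleton] at ht
      rcases ht with rfl | rfl | rfl
      · exact ⟨by simp +zetaDelta, by simp +zetaDelta⟩
      · refine ⟨by simp +zetaDelta [Fin.sum_univ_two], ?_⟩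
        show (0 : G) + ∑ i : Fin 2, (![β, 0] i) = β
        simp [Fin.sum_univ_two]
      · refine ⟨by simp +zetaDelta [Fin.sum_univ_two]; omega, ?_⟩
        show (0 : G) + ∑ i : Fin 2, (![0, β] i) = β
        simp [Fin.sum_univ_two]
    · -- all other composition terms vanish
      rintro ⟨l, r, β₀, βs⟩ ⟨h1, h2⟩ hnot
      dsimp only at h1 h2
      simp only [Finset.mem_insert, Finset.mem_singleton] at hnot
      push_neg at hnot
      obtain ⟨hnAll, hnA, hnB⟩ := hnot
      by_cases hall : ∀ i, 1 ≤ r i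
      · -- all chunks have positive arity
        have hsumr : (∑ i, ((r i : ℝ))) = (j : ℝ) + 1 := by
          have := congrArg (Nat.cast : ℕ → ℝ) h1
          push_cast at this
          exact this
        have hsumβ : (β₀ : ℝ) + ∑ i, ((βs i : ℝ)) = (β : ℝ) := by
          have := congrArg (fun x : G => (x : ℝ)) h2
          rw [show (((β₀ + ∑ i, βs i : G)) : ℝ) = (β₀ : ℝ) + ((∑ i, βs i : G) : ℝ)
            from by push_cast; ring, G_coe_sum] at this
          exact this
        have hwnn : ∀ i : Fin l, (0 : ℝ) ≤ ((r i : ℝ) + (βs i : ℝ)) - 1 := by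
          intro i
          have h1r : (1 : ℝ) ≤ (r i : ℝ) := by exact_mod_cast hall i
          have hbnn := hGnn _ (βs i).2
          linarith
        have hsplit : (∑ i : Fin l, (((r i : ℝ) + (βs i : ℝ)) - 1)) =
            ((j : ℝ) + 1) + ((β : ℝ) - (β₀ : ℝ)) - (l : ℝ) := by
          rw [Finset.sum_sub_distrib, Finset.sum_add_distrib, hsumr]
          simp only [Finset.sum_const, Finset.card_univ, Fintype.card_fin, nsmul_eq_mul,
            mul_one]
          linarith
        have hβ₀nn := hGnn _ β₀.2
        have hjβ' : (j : ℝ) + 1 + (β : ℝ) = ν₀ := by push_cast at hjβ; linarith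
        have hsumW : (l : ℝ) + (β₀ : ℝ) + (∑ i : Fin l, (((r i : ℝ) + (βs i : ℝ)) - 1)) = ν₀ := by
          rw [hsplit]; linarith
        have hsumWnn : (0 : ℝ) ≤ ∑ i : Fin l, (((r i : ℝ) + (βs i : ℝ)) - 1) :=
          Finset.sum_nonneg (fun i _ => hwnn i)
        rcases (by omega : l = 0 ∨ l = 1 ∨ 2 ≤ l) with rfl | rfl | hl2
        · exfalso; simp at h1
        · exact congrFun (hmin β₀) _
        · have h2leW0 : (2 : ℝ) ≤ (l : ℝ) + (β₀ : ℝ) := by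
            have : (2 : ℝ) ≤ (l : ℝ) := by exact_mod_cast hl2
            linarith
          rcases lt_trichotomy ((l : ℝ) + (β₀ : ℝ)) ν₀ with hlt | heqν | hgt
          · rcases eq_or_lt_of_le h2leW0 with heq2 | hlt2
            · -- outer weight exactly 2 : l = 2, β₀ = 0
              have hl2' : l = 2 := by
                have hle : (l : ℝ) ≤ 2 := by linarith
                have : l ≤ 2 := by exact_mod_cast hle
                omega
              subst hl2'
              have hβ₀0 : β₀ = 0 := by
                apply G_coe_inj
                rw [show ((0 : G) : ℝ) = (0 : ℝ) from rfl]
                have : (2 : ℝ) ≤ (2 : ℕ) := by norm_num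
                push_cast at heq2
                linarith
              subst hβ₀0
              -- chunk trichotomy
              have tri : ∀ i : Fin 2, (r i = 1 ∧ βs i = 0) ∨ (f (r i) (βs i) = 0) ∨
                  (ν₀ - 1 ≤ (r i : ℝ) + (βs i : ℝ)) := by
                intro i
                have h1r : (1 : ℝ) ≤ (r i : ℝ) := by exact_mod_cast hall i
                have hbnn := hGnn _ (βs i).2
                rcases eq_or_lt_of_le (show (1 : ℝ) ≤ (r i : ℝ) + (βs i : ℝ) from by linarith)
                  with hw1 | hw1
                · left
                  constructor
                  · have hx1 : (r i : ℝ) ≤ 1 := by linarith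
                    have hx2 : r i ≤ 1 := by exact_mod_cast hx1
                    have hx3 := hall i
                    omega
                  · apply G_coe_inj
                    rw [show ((0 : G) : ℝ) = (0 : ℝ) from rfl]
                    have : (r i : ℝ) ≤ 1 := by linarith
                    have hri : 1 ≤ r i := hall i
                    have : (1 : ℝ) ≤ (r i : ℝ) := by exact_mod_cast hri
                    linarith
                · rcases lt_or_ge ((r i : ℝ) + (βs i : ℝ)) (ν₀ - 1) with hsm | hbig
                  · exact Or.inr (Or.inl (hfν (r i) (βs i) hw1 hsm))
                  · exact Or.inr (Or.inr hbig)
              have hr01 : r 0 + r 1 = j + 1 := by rw [← Fin.sum_univ_two]; exact h1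
              have hβ01 : βs 0 + βs 1 = β := by
                have : (0 : G) + (βs 0 + βs 1) = β := by rw [← Fin.sum_univ_two]; exact h2
                rwa [zero_add] at this
              rcases tri 0 with ⟨hra, hba⟩ | hz0 | hbig0
              · -- first chunk trivial : the index is tB
                exfalso
                apply hnB
                rw [htBdef]
                refine congrArg (Sigma.mk 2) ?_
                have hr1 : r 1 = j := by omega
                have hb1 : βs 1 = β := by rw [hba, zero_add] at hβ01; exact hβ01
                refine Prod.ext ?_ (Prod.ext rfl ?_)
                · funext i
                  rcases (by omega : (i : ℕ) = 0 ∨ (i : ℕ) = 1) with hi | hi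
                  · rw [show i = 0 from Fin.ext hi]; simpa using hra
                  · rw [show i = 1 from Fin.ext hi]; simpa using hr1
                · funext i
                  rcases (by omega : (i : ℕ) = 0 ∨ (i : ℕ) = 1) with hi | hi
                  · rw [show i = 0 from Fin.ext hi]; simpa using hba
                  · rw [show i = 1 from Fin.ext hi]; simpa using hb1
              · exact homTerm_zero_of_chunk_zero m f hmlin α ⟨2, r, 0, βs⟩ 0 (congrFun hz0 _)
              · rcases tri 1 with ⟨hra, hba⟩ | hz1 | hbig1
                · -- second chunk trivial : the index is tA
                  exfalso
                  apply hnA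
                  rw [htAdef]
                  refine congrArg (Sigma.mk 2) ?_
                  have hr0 : r 0 = j := by omega
                  have hb0 : βs 0 = β := by rw [hba, add_zero] at hβ01; exact hβ01
                  refine Prod.ext ?_ (Prod.ext rfl ?_)
                  · funext i
                    rcases (by omega : (i : ℕ) = 0 ∨ (i : ℕ) = 1) with hi | hi
                    · rw [show i = 0 from Fin.ext hi]; simpa using hr0
                    · rw [show i = 1 from Fin.ext hi]; simpa using hra
                  · funext i
                    rcases (by omega : (i : ℕ) = 0 ∨ (i : ℕ) = 1) with hi | hi
                    · rw [show i = 0 from Fin.ext hi]; simpa using hb0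
                    · rw [show i = 1 from Fin.ext hi]; simpa using hba
                · exact homTerm_zero_of_chunk_zero m f hmlin α ⟨2, r, 0, βs⟩ 1 (congrFun hz1 _)
                · -- both chunks heavy : impossible
                  exfalso
                  have hs2 : (∑ i : Fin 2, (((r i : ℝ) + (βs i : ℝ)) - 1)) =
                      (((r 0 : ℝ) + (βs 0 : ℝ)) - 1) + (((r 1 : ℝ) + (βs 1 : ℝ)) - 1) :=
                    Fin.sum_univ_two _
                  rw [hs2] at hsumW
                  have : ((0 : G) : ℝ) = 0 := rfl
                  push_cast at hsumW
                  linarith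
            · -- strictly between 2 and ν₀ : outer operation vanishes
              exact congrFun (hmν l β₀ hlt2 hlt) _
          · -- outer weight exactly ν₀ : the index is tAll
            exfalso
            apply hnAll
            have hz : ∀ i : Fin l, ((r i : ℝ) + (βs i : ℝ)) - 1 = 0 := by
              have hsum0 : (∑ i : Fin l, (((r i : ℝ) + (βs i : ℝ)) - 1)) = 0 := by linarith
              intro i
              exact (Finset.sum_eq_zero_iff_of_nonneg (fun i _ => hwnn i)).1 hsum0 i
                (Finset.mem_univ i)
            have hri : ∀ i : Fin l, r i = 1 := by
              intro i
              have h1r : 1 ≤ r i := hall i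
              have hbnn := hGnn _ (βs i).2
              have h1r' : (1 : ℝ) ≤ (r i : ℝ) := by exact_mod_cast h1r
              have : (r i : ℝ) ≤ 1 := by have := hz i; linarith
              have : r i ≤ 1 := by exact_mod_cast this
              omega
            have hbi : ∀ i : Fin l, βs i = 0 := by
              intro i
              apply G_coe_inj
              rw [show ((0 : G) : ℝ) = (0 : ℝ) from rfl]
              have := hz i
              have : (r i : ℝ) = 1 := by rw [hri i]; norm_num
              have := hz i
              rw [this] at *
              have h3 := hz i
              rw [show ((r i : ℕ) : ℝ) = 1 from by rw [hri i]; norm_num] at h3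
              linarith
            have hlval : l = j + 1 := by
              rw [Finset.sum_congr rfl (fun i _ => hri i)] at h1
              simpa using h1
            subst hlval
            have hβ₀β : β₀ = β := by
              apply G_coe_inj
              have : ((j + 1 : ℕ) : ℝ) = (j : ℝ) + 1 := by push_cast; ring
              linarith [heqν, hβval]
            rw [htAlldef]
            refine congrArg (Sigma.mk (j + 1)) ?_
            exact Prod.ext (funext hri) (Prod.ext hβ₀β (funext hbi))
          · -- outer weight above ν₀ : impossible
            exfalso; linarith
      · push_neg at hall
        obtain ⟨j₀, hj₀⟩ := hall
        exact homTerm_zero_of_chunk_zero m f hmlin α ⟨l, r, β₀, βs⟩ j₀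
          (hfkey (r j₀) (by omega) (βs j₀) _)
  -- evaluate the A∞ side
  set uTop : ℕ × ℕ × ℕ × G × G := (1, j + 1, 0, 0, β) with huTopdef
  have hTopNotMem : uTop ∉ (Finset.range j).image (fun i₀ => ((j, 2, i₀, β, 0) : ℕ × ℕ × ℕ × G × G)) := by
    intro hmem
    simp only [Finset.mem_image, Finset.mem_range] at hmem
    obtain ⟨i₀, hi₀, heq⟩ := hmem
    rw [huTopdef, Prod.mk.injEq] at heq
    obtain ⟨hj1, heq2⟩ := heq
    rw [Prod.mk.injEq] at heq2
    have hβ0 : (0 : G) = β := by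
      have := heq2.2
      rw [Prod.mk.injEq] at this
      have := this.2
      rw [Prod.mk.injEq] at this
      exact this.2
    have : (β : ℝ) = 0 := by rw [← hβ0]; rfl
    rw [hβval] at this
    subst hj1
    norm_num at this
    linarith
  have hR : (∑ᶠ t ∈ ainfIdx G (j + 1) β, ainfTerm 𝕂 f m' d α t) =
      ainfTerm 𝕂 f m' d α uTop +
        ∑ i₀ ∈ Finset.range j, ainfTerm 𝕂 f m' d α (j, 2, i₀, β, 0) := by
    rw [finsum_mem_eq_finset_sum _ _
      (insert uTop ((Finset.range j).image (fun i₀ => ((j, 2, i₀, β, 0) : ℕ × ℕ × ℕ × G × G))))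
      ?_ ?_]
    · rw [Finset.sum_insert hTopNotMem, Finset.sum_image ?_]
      intro x _ y _ hxy
      rw [Prod.mk.injEq] at hxy
      have := hxy.2
      rw [Prod.mk.injEq] at this
      have := this.2
      rw [Prod.mk.injEq] at this
      exact this.1
    · intro t ht
      simp only [Finset.mem_insert, Finset.mem_image, Finset.mem_range] at ht
      rcases ht with rfl | ⟨i₀, hi₀, rfl⟩
      · exact ⟨show 1 + (j + 1) = (j + 1) + 1 from by omega, Nat.zero_lt_one, zero_add β⟩
      · exact ⟨show j + 2 = (j + 1) + 1 from by omega, hi₀, add_zero β⟩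
    · rintro ⟨k₁, k₂, i₀, β₁, β₂⟩ ⟨h1, h2, h3⟩ hnot
      dsimp only at h1 h2 h3
      simp only [Finset.mem_insert, Finset.mem_image, Finset.mem_range] at hnot
      push_neg at hnot
      obtain ⟨hnTop, hnMid⟩ := hnot
      rcases (by omega : k₂ = 0 ∨ k₂ = 1 ∨ 2 ≤ k₂) with rfl | rfl | hk2
      · exact ainfTerm_zero_of_inner_zero f m' hflin d α _ h2 (hm'flat β₂ _)
      · exact ainfTerm_zero_of_inner_zero f m' hflin d α _ h2 (hm'min β₂ _)
      · have hβ1nn := hGnn _ β₁.2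
        have hβ2nn := hGnn _ β₂.2
        have hjβ' : (j : ℝ) + 1 + (β : ℝ) = ν₀ := by push_cast at hjβ; linarith
        have hsumβ : (β₁ : ℝ) + (β₂ : ℝ) = (β : ℝ) := by
          have := congrArg (fun x : G => (x : ℝ)) h3
          push_cast at this
          exact this
        have hW : ((k₁ : ℝ) + (β₁ : ℝ)) + ((k₂ : ℝ) + (β₂ : ℝ)) = ν₀ + 1 := by
          have hk : (k₁ : ℝ) + (k₂ : ℝ) = (j : ℝ) + 2 := by exact_mod_cast congrArg (Nat.cast : ℕ → ℝ) h1
          linarith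
        rcases lt_or_ge ((k₂ : ℝ) + (β₂ : ℝ)) ν₀ with hlt | hge
        · have h2le : (2 : ℝ) ≤ (k₂ : ℝ) + (β₂ : ℝ) := by
            have : (2 : ℝ) ≤ (k₂ : ℝ) := by exact_mod_cast hk2
            linarith
          rcases eq_or_lt_of_le h2le with heq2 | hgt2
          · -- inner weight exactly 2 : the index is one of the middle terms
            exfalso
            have hk2' : k₂ = 2 := by
              have hle : (k₂ : ℝ) ≤ 2 := by linarith
              have : k₂ ≤ 2 := by exact_mod_cast hle
              omega
            subst hk2'
            have hβ20 : β₂ = 0 := by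
              apply G_coe_inj
              rw [show ((0 : G) : ℝ) = (0 : ℝ) from rfl]
              push_cast at heq2
              linarith
            subst hβ20
            have hk1 : k₁ = j := by omega
            subst hk1
            have hβ1β : β₁ = β := by rw [add_zero] at h3; exact h3
            subst hβ1β
            exact hnMid i₀ h2 rfl
          · exact ainfTerm_zero_of_inner_zero f m' hflin d α _ h2
              (congrFun (hm'ν k₂ β₂ hgt2 hlt) _)
        · -- inner weight at least ν₀ : the index is the top term
          exfalso
          have hk1ge : 1 ≤ k₁ := by omega
          have hk1le : (k₁ : ℝ) + (β₁ : ℝ) ≤ 1 := by linarith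
          have hk1eq : k₁ = 1 := by
            have h1le : (1 : ℝ) ≤ (k₁ : ℝ) := by exact_mod_cast hk1ge
            have : (k₁ : ℝ) ≤ 1 := by linarith
            have : k₁ ≤ 1 := by exact_mod_cast this
            omega
          subst hk1eq
          have hβ10 : β₁ = 0 := by
            apply G_coe_inj
            rw [show ((0 : G) : ℝ) = (0 : ℝ) from rfl]
            have : (1 : ℝ) ≤ ((1 : ℕ) : ℝ) := by norm_num
            push_cast at hk1le
            linarith
          subst hβ10
          have hk2' : k₂ = j + 1 := by omega
          subst hk2'
          have hβ2β : β₂ = β := by rw [zero_add] at h3; exact h3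
          subst hβ2β
          have hi₀ : i₀ = 0 := by omega
          subst hi₀
          exact hnTop rfl
  -- evaluate the three distinguished terms
  have hTAll : homTerm m f α tAll = m (j + 1) β α := by
    rw [htAlldef]
    show m (j + 1) β (fun i : Fin (j + 1) => f 1 0
      (fun x : Fin 1 => extZ α (chunkOff (fun _ : Fin (j + 1) => 1) i + (x : ℕ)))) =
      m (j + 1) β α
    congr 1
    funext i
    rw [hf10]
    show extZ α (chunkOff (fun _ => 1) i + ((0 : Fin 1) : ℕ)) = α i
    rw [chunkOff_const_one]
    show extZ α (i : ℕ) = α i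
    exact extZ_fin α i
  have hTop : ainfTerm 𝕂 f m' d α uTop = m' (j + 1) β α := by
    rw [huTopdef]
    unfold ainfTerm insSign
    simp only [Finset.range_zero, Finset.sum_empty, sgn2_zero, one_smul]
    rw [hf10]
    show insArg 1 (j + 1) 0 _ _ ⟨0, Nat.zero_lt_one⟩ = _
    rw [insArg_at]
    congr 1
    funext l
    rw [show (0 + (l : ℕ)) = (l : ℕ) from by omega, extZ_fin]
  -- notation for the sign data
  set e : ZMod 2 := par2 (((1 - (j : ℤ)) : ℤ) : ZMod N) + (j : ZMod 2) with hedef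
  set out : ZMod N := (((1 - (j : ℤ)) : ℤ) : ZMod N) with houtdef
  have he : e = 1 := e_val hN j
  have hc0 : ∀ r : Fin 2 → ℕ, chunkOff r 0 = 0 := fun r => chunkOff_zero r (by omega)
  -- the three pieces of the Hochschild coboundary
  have hHB : hochB 𝕂 (ulP 𝕂 m) e out (f j β) d α =
      homTerm m f α tB +
        (- ∑ i₀ ∈ Finset.range j, ainfTerm 𝕂 f m' d α ((j, 2, i₀, β, 0) : ℕ × ℕ × ℕ × G × G)) +
        homTerm m f α tA := by
    unfold hochB
    refine congrArg₂ (· + ·) (congrArg₂ (· + ·) ?_ ?_) ?_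
    · -- first term equals the tB composition term
      unfold ulP
      rw [smul_smul, ← sgn2_add]
      have hE : e * (par2 (d 0) + 1) + 1 + par2 (d 0) = 0 := by
        rw [he]
        rcases zmod2_cases (par2 (d 0)) with h | h <;> rw [h] <;> decide
      rw [hE, sgn2_zero, one_smul, htBdef]
      show m 2 0 _ = m 2 0 _
      congr 1
      funext i
      rcases (by omega : (i : ℕ) = 0 ∨ (i : ℕ) = 1) with hi | hi
      · rw [show i = 0 from Fin.ext hi]
        show α 0 = f 1 0 (fun x : Fin 1 => extZ α (chunkOff ![1, j] 0 + (x : ℕ)))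
        rw [hf10, hc0]
        show α 0 = extZ α (0 + ((0 : Fin 1) : ℕ))
        rw [show (0 + ((0 : Fin 1) : ℕ)) = 0 from by simp, extZ_lt α 0 (by omega)]
        exact congrArg α (Fin.ext (by simp))
      · rw [show i = 1 from Fin.ext hi]
        show f j β _ = f j β _
        congr 1
        funext x
        show α x.succ = extZ α (chunkOff ![1, j] 1 + (x : ℕ))
        rw [chunkOff_fin2_one]
        show α x.succ = extZ α (1 + (x : ℕ))
        rw [extZ_lt α _ (by omega)]
        exact congrArg α (Fin.ext (by simp [Fin.val_succ, Nat.add_comm]))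
    · -- middle terms equal minus the A∞-side terms
      rw [← Finset.sum_neg_distrib]
      refine Finset.sum_congr rfl ?_
      intro i₀ hi₀mem
      rw [Finset.mem_range] at hi₀mem
      -- the inserted product
      unfold ulP
      set c : 𝕂 := sgn2 𝕂 (par2 (extZ d i₀)) with hcdef
      set v : C := m 2 0 ![extZ α i₀, extZ α (i₀ + 1)] with hvdef
      have hpull : f j β (insArg j 2 i₀ (c • v) (extZ α)) =
          c • f j β (insArg j 2 i₀ v (extZ α)) := by
        rw [insArg_update j 2 i₀ (c • v) v (extZ α) hi₀mem, (hflin j β).2,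
          insArg_update_self j 2 i₀ v (extZ α) hi₀mem]
      rw [hpull, smul_smul, ← sgn2_add]
      -- the A∞-side term with `m'` replaced by `m`
      have hinner : m' 2 0 (fun l : Fin 2 => extZ α (i₀ + (l : ℕ))) = v := by
        rw [hm'two (fun l : Fin 2 => extZ d (i₀ + (l : ℕ))) _
          (fun l => extZ_homog d α hα _)]
        rw [hvdef]
        congr 1
        funext l
        rcases (by omega : (l : ℕ) = 0 ∨ (l : ℕ) = 1) with hl | hl
        · rw [show l = 0 from Fin.ext hl]
          show extZ α (i₀ + ((0 : Fin 2) : ℕ)) = extZ α i₀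
          rw [show (i₀ + ((0 : Fin 2) : ℕ)) = i₀ from by simp]
        · rw [show l = 1 from Fin.ext hl]
          show extZ α (i₀ + ((1 : Fin 2) : ℕ)) = extZ α (i₀ + 1)
          rfl
      have hsign : e + 1 + (∑ l ∈ Finset.range (i₀ + 1), (par2 (extZ d l) + 1)) +
          par2 (extZ d i₀) = insSign (extZ d) i₀ + 1 := by
        rw [he, Finset.sum_range_succ]
        unfold insSign
        set I := ∑ l ∈ Finset.range i₀, (par2 (extZ d l) + 1)
        set p := par2 (extZ d i₀)
        rcases zmod2_cases I with hI | hI <;> rcases zmod2_cases p with hp | hp <;>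
          rw [hI, hp] <;> decide
      rw [hsign]
      unfold ainfTerm
      rw [hinner]
      rw [sgn2_add, sgn2_one]
      show (sgn2 𝕂 (insSign (extZ d) i₀) * (-1)) • f j β (insArg j 2 i₀ v (extZ α)) = _
      rw [mul_neg_one, neg_smul]
    · -- last term equals the tA composition term
      unfold ulP
      rw [smul_smul, ← sgn2_add]
      have hsum1 : (∑ l ∈ Finset.range j, (par2 (extZ d l) + 1)) =
          (∑ l ∈ Finset.range j, par2 (extZ d l)) + (j : ZMod 2) := by
        rw [Finset.sum_add_distrib, Finset.sum_const, Finset.card_range, nsmul_eq_mul,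
          mul_one]
      have hsum2 : (∑ l ∈ Finset.range j, par2 (extZ d l)) =
          par2 (∑ jj : Fin j, d jj.castSucc) := by
        rw [par2_sum hN]
        rw [← Fin.sum_univ_eq_sum_range (fun l => par2 (extZ d l)) j]
        refine Finset.sum_congr rfl ?_
        intro x _
        rw [extZ_lt d _ (by omega)]
        exact congrArg (fun z => par2 (d z)) (Fin.ext (by simp))
      have hout2 : par2 out = 1 - (j : ZMod 2) := by
        rw [houtdef, par2_intCast hN]
        push_cast
        ring
      have hE : e + (∑ l ∈ Finset.range j, (par2 (extZ d l) + 1)) +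
          par2 ((∑ jj : Fin j, d jj.castSucc) + out) = 0 := by
        rw [he, hsum1, hsum2, par2_add hN, hout2]
        set P := par2 (∑ jj : Fin j, d jj.castSucc)
        set J := ((j : ℕ) : ZMod 2)
        rcases zmod2_cases P with hP | hP <;> rcases zmod2_cases J with hJ | hJ <;>
          rw [hP, hJ] <;> decide
      rw [hE, sgn2_zero, one_smul, htAdef]
      show m 2 0 _ = m 2 0 _
      congr 1
      funext i
      rcases (by omega : (i : ℕ) = 0 ∨ (i : ℕ) = 1) with hi | hi
      · rw [show i = 0 from Fin.ext hi]
        show f j β _ = f j β _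
        congr 1
        funext x
        show α x.castSucc = extZ α (chunkOff ![j, 1] 0 + (x : ℕ))
        rw [hc0]
        show α x.castSucc = extZ α (0 + (x : ℕ))
        rw [extZ_lt α _ (by omega)]
        exact congrArg α (Fin.ext (by simp))
      · rw [show i = 1 from Fin.ext hi]
        show α (Fin.last j) = f 1 0 (fun x : Fin 1 => extZ α (chunkOff ![j, 1] 1 + (x : ℕ)))
        rw [hf10, chunkOff_fin2_one]
        show α (Fin.last j) = extZ α (j + ((0 : Fin 1) : ℕ))
        rw [show (j + ((0 : Fin 1) : ℕ)) = j from by simp, extZ_lt α _ (by omega)]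
        exact congrArg α (Fin.ext (by simp))
  -- put everything together
  have hrel' : m (j + 1) β α + (homTerm m f α tA + homTerm m f α tB) =
      m' (j + 1) β α + ∑ i₀ ∈ Finset.range j, ainfTerm 𝕂 f m' d α (j, 2, i₀, β, 0) := by
    rw [← hTAll, ← hL, hrel, hR, hTop]
  rw [hHB]
  have hfinal : m' (j + 1) β α = m (j + 1) β α + (homTerm m f α tA + homTerm m f α tB) -
      ∑ i₀ ∈ Finset.range j, ainfTerm 𝕂 f m' d α (j, 2, i₀, β, 0) := by
    rw [eq_sub_iff_add_eq]
    exact hrel'.symm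
  rw [hfinal]
  abel

end Part2

/-- Let `(C, m)` be a flat minimal `G`-gapped `A∞` algebra and `f` a
`G`-gapped formal diffeomorphism of `C` with `f_{1,0} = Id`, and let `m' = f*m` be the
pull-back `A∞` structure (the family making `f` an `A∞` homomorphism
`(C, m') → (C, m)`).  Then `(f*m)_{2,0} = m_{2,0}`.  Furthermore, for `ν₀ > 2` with
`ν(f) ≥ ν₀ − 1` and `ν(m) ≥ ν₀`, if `(f*m)_{k',β'} = 0` whenever `2 < k'+β' < ν₀` and
whenever `k'+β' = ν₀` with `k' < k`, then for `k = j+1` and `β = ν₀ − k` one has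
`(f*m)_{k,β} = m_{k,β} + 𝔟(f_{k−1,β})` (the Hochschild differential of `f_{k−1,β}`,
a cochain of degree `2−k` and arity `k−1` of the underlying algebra `A_C`); and this
expression vanishes if both inequalities are strict. -/
theorem pullback_obstruction_formula {𝕂 : Type} [Field 𝕂] {N : ℕ} (hN : 2 ∣ N)
    (G : AddSubmonoid ℝ) (hGnn : ∀ x ∈ G, (0 : ℝ) ≤ x)
    (hGfin : ∀ E : ℝ, {x : ℝ | x ∈ G ∧ x ≤ E}.Finite)
    {C : Type} [AddCommGroup C] [Module 𝕂 C] (ℳ : ZMod N → Submodule 𝕂 C)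
    [DirectSum.Decomposition ℳ]
    (m : ∀ k : ℕ, G → (Fin k → C) → C) (hm : IsGappedAinf 𝕂 G ℳ m)
    (hflat : ∀ β : G, m 0 β = 0) (hmin : ∀ β : G, m 1 β = 0)
    -- `f` is a formal diffeomorphism with `f_{1,0} = Id`
    (f : ∀ k : ℕ, G → (Fin k → C) → C) (hf : IsGappedPreHom 𝕂 G ℳ ℳ f)
    (hf0 : ∀ β : G, f 0 β = 0)
    (hf10 : ∀ α : Fin 1 → C, f 1 0 α = α 0)
    -- `m' = f*m` is the pull-back structure
    (m' : ∀ k : ℕ, G → (Fin k → C) → C)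
    (hm'lin : ∀ (k : ℕ) (β : G), IsMultilin 𝕂 (m' k β))
    (hm'deg : ∀ (k : ℕ) (β : G), HasDeg ℳ ℳ (2 - (k : ℤ)) (m' k β))
    (hm'zero : m' 0 0 = 0)
    (hpull : IsGappedHom 𝕂 G ℳ ℳ m' m f) :
    -- `(f*m)_{2,0} = m_{2,0}`
    (∀ α : Fin 2 → C, m' 2 0 α = m 2 0 α) ∧
    -- the obstruction formula at level `ν₀`
    (∀ ν₀ : ℝ, 2 < ν₀ →
      (∀ (k : ℕ) (β : G), 1 < (k : ℝ) + (β : ℝ) → (k : ℝ) + (β : ℝ) < ν₀ - 1 →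
        f k β = 0) →
      (∀ (k : ℕ) (β : G), 2 < (k : ℝ) + (β : ℝ) → (k : ℝ) + (β : ℝ) < ν₀ →
        m k β = 0) →
      (∀ (k' : ℕ) (β' : G), 2 < (k' : ℝ) + (β' : ℝ) → (k' : ℝ) + (β' : ℝ) < ν₀ →
        m' k' β' = 0) →
      ∀ (j : ℕ) (β : G), ((j + 1 : ℕ) : ℝ) + (β : ℝ) = ν₀ →
        (∀ (k' : ℕ) (β' : G), (k' : ℝ) + (β' : ℝ) = ν₀ → k' < j + 1 → m' k' β' = 0) →
        -- `(f*m)_{j+1,β} = m_{j+1,β} + 𝔟(f_{j,β})`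
        ((∀ (d : Fin (j + 1) → ZMod N) (α : Fin (j + 1) → C), (∀ i, α i ∈ ℳ (d i)) →
          m' (j + 1) β α = m (j + 1) β α +
            hochB 𝕂 (ulP 𝕂 m) (par2 (((1 - (j : ℤ)) : ℤ) : ZMod N) + (j : ZMod 2))
              (((1 - (j : ℤ)) : ℤ) : ZMod N) (f j β) d α) ∧
        -- vanishing when both inequalities `ν(f) ≥ ν₀ − 1`, `ν(m) ≥ ν₀` are strict
        ((∀ (k : ℕ) (β' : G), 1 < (k : ℝ) + (β' : ℝ) → (k : ℝ) + (β' : ℝ) ≤ ν₀ - 1 →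
            f k β' = 0) →
          (∀ (k : ℕ) (β' : G), 2 < (k : ℝ) + (β' : ℝ) → (k : ℝ) + (β' : ℝ) ≤ ν₀ →
            m k β' = 0) →
          m' (j + 1) β = 0))) := by
  have hcomp := hpull.hom
  have hmlin := hm.multilinear
  have hflin := hpull.prehom.multilinear
  -- pull-backs of flat, minimal structures are flat and minimal
  have hm'flat : ∀ (β : G) (x : Fin 0 → C), m' 0 β x = 0 :=
    pullback_flat hGnn hGfin hmlin hflin hflat hf0 hf10 hcomp
  have hm'min : ∀ (β : G) (α : Fin 1 → C), m' 1 β α = 0 :=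
    pullback_min hGnn hGfin hmlin hflin hmin hf0 hf10 hcomp hm'lin hm'flat
  have hm'two : ∀ (d : Fin 2 → ZMod N) (α : Fin 2 → C), (∀ i, α i ∈ ℳ (d i)) →
      m' 2 0 α = m 2 0 α :=
    pullback_two_homog hGnn hmlin hflin hmin hf0 hf10 hcomp hm'flat hm'min
  constructor
  · exact multilin_eq_of_homog ℳ (hm'lin 2 0) (hmlin 2 0) hm'two
  · intro ν₀ hν hfν hmν hm'ν j β hjβ _hm'top
    have hmain := pullback_obstruction_main hN hGnn hmlin hflin hflat hmin hf0 hf10 hcomp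
      hm'flat hm'min hm'two hν hfν hmν hm'ν hjβ
    refine ⟨hmain, ?_⟩
    -- vanishing when both inequalities are strict
    intro hfs hms
    have hβnn := hGnn _ β.2
    have hjβ' : (j : ℝ) + 1 + (β : ℝ) = ν₀ := by push_cast at hjβ; linarith
    have hfjβ : f j β = 0 := by
      apply hfs j β <;> push_cast <;> linarith
    have hmjβ : m (j + 1) β = 0 := by
      apply hms (j + 1) β <;> push_cast <;> linarith
    have hzero : ∀ (d : Fin (j + 1) → ZMod N) (α : Fin (j + 1) → C),
        (∀ i, α i ∈ ℳ (d i)) → m' (j + 1) β α = 0 := by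
      intro d α hα
      rw [hmain d α hα, congrFun hmjβ α]
      have hη : ∀ A : Fin j → C, f j β A = 0 := fun A => by rw [hfjβ]; rfl
      have hulP0r : ∀ (a b : ZMod N) (x : C), ulP 𝕂 m a b x 0 = 0 := by
        intro a b x
        unfold ulP
        rw [multilin_zero_entry (hmlin 2 0) ![x, 0] 1 (by simp), smul_zero]
      have hulP0l : ∀ (a b : ZMod N) (y : C), ulP 𝕂 m a b 0 y = 0 := by
        intro a b y
        unfold ulP
        rw [multilin_zero_entry (hmlin 2 0) ![0, y] 0 (by simp), smul_zero]
      have hhoch : hochB 𝕂 (ulP 𝕂 m) (par2 (((1 - (j : ℤ)) : ℤ) : ZMod N) + (j : ZMod 2))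
          (((1 - (j : ℤ)) : ℤ) : ZMod N) (f j β) d α = 0 := by
        unfold hochB
        rw [hη, hη, hulP0r, hulP0l, smul_zero, smul_zero]
        rw [Finset.sum_eq_zero (fun i₀ _ => by rw [hη, smul_zero])]
        simp
      rw [hhoch]
      simp [Pi.zero_apply]
    funext α
    exact multilin_eq_of_homog ℳ (hm'lin (j + 1) β) zero_multilin hzero α
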